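/- arXiv:2210.01175 — 10 statements merged into one kernel-verified Lean document; each statement's English description precedes it below -/
import Mathlib

section
/- Let H, F : ℝ × ℝ → Matrix (Fin 2) (Fin 2) ℂ be differentiable at a point (t,x) (entrywise partial derivatives H_t, H_x, F_t, F_x exist there). For k ∈ ℂ∖{0} define U(t,x;k) = −(i·k·σ₃ + H(t,x)) and V(t,x;k) = i·k·σ₃ + H(t,x) + (i/(4k))·F(t,x). Then the zero-curvature condition ∂U/∂x − ∂V/∂t + [U,V] = 0 holds at (t,x) for every k ∈ ℂ∖{0} if and only if the matrix Maxwell–Bloch equations hold at (t,x): ∂H/∂t + ∂H/∂x = (1/4)·[σ₃, F] and ∂F/∂t = [F, H]. -/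
open Matrix

/-- The Pauli matrix `σ₃ = diag(1, −1)`. -/
def sigma3 : Matrix (Fin 2) (Fin 2) ℂ := !![1, 0; 0, -1]

/-! With `U = -(c S + H)` and `V = c S + H + d F`, `[U, V] = -d [c S + H, F]` because `[X, X] = 0`.
So once `d c = -1/4` is fixed, the curvature `U_x - V_t + [U, V]` is affine in `d`, with the two
Maxwell–Bloch residuals as its coefficients, and two values of the spectral parameter separate
them. -/

theorem zero_curvature_eq {R A : Type*} [CommRing R] [Ring A] [Algebra R A]
    (S H F Ht Hx Ft : A) (c d e : R) (hdc : d * c = e) :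
    -Hx - (Ht + d • Ft) + (-(c • S + H) * (c • S + H + d • F) - (c • S + H + d • F) * -(c • S + H))
      = -((Ht + Hx + e • (S * F - F * S)) + d • (Ft - (F * H - H * F))) := by
  subst hdc
  simp only [mul_add, add_mul, neg_mul, mul_neg, smul_mul_assoc, mul_smul_comm]
  module

theorem forall_ne_zero_add_div_smul_eq_zero_iff {K M : Type*} [Field K] [NeZero (2 : K)]
    [AddCommGroup M] [Module K M] {a : K} (ha : a ≠ 0) (C D : M) :
    (∀ k : K, k ≠ 0 → C + (a / k) • D = 0) ↔ C = 0 ∧ D = 0 := by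
  refine ⟨fun h => ?_, fun ⟨hC, hD⟩ _ _ => by rw [hC, hD, smul_zero, add_zero]⟩
  have hplus := h 1 one_ne_zero
  have hminus := h (-1) (neg_ne_zero.mpr one_ne_zero)
  rw [div_one] at hplus
  rw [div_neg, div_one, neg_smul] at hminus
  have h2aD : (2 * a) • D = 0 := by
    rw [mul_smul, two_smul, ← sub_eq_zero.mpr (hplus.trans hminus.symm)]
    abel
  have hD : D = 0 := (smul_eq_zero.mp h2aD).resolve_left (mul_ne_zero two_ne_zero ha)
  exact ⟨by simpa [hD] using hplus, hD⟩

theorem I_div_four_mul_mul_I_mul {k : ℂ} (hk : k ≠ 0) :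
    Complex.I / (4 * k) * (Complex.I * k) = -(1 / 4) := by
  field_simp
  linear_combination Complex.I_sq

theorem zero_curvature_iff_maxwell_bloch_general
    (H F : ℝ × ℝ → Matrix (Fin 2) (Fin 2) ℂ) (t x : ℝ)
    (Ht Hx Ft : Matrix (Fin 2) (Fin 2) ℂ) :
    (∀ k : ℂ, k ≠ 0 →
        (-Hx) - (Ht + (Complex.I / (4 * k)) • Ft)
          + ((-((Complex.I * k) • sigma3 + H (t, x)))
                * ((Complex.I * k) • sigma3 + H (t, x) + (Complex.I / (4 * k)) • F (t, x))
              - ((Complex.I * k) • sigma3 + H (t, x) + (Complex.I / (4 * k)) • F (t, x))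
                * (-((Complex.I * k) • sigma3 + H (t, x)))) = 0)
    ↔
    (Ht + Hx = (1/4 : ℂ) • (sigma3 * F (t, x) - F (t, x) * sigma3) ∧
      Ft = F (t, x) * H (t, x) - H (t, x) * F (t, x)) := by
  rw [← sub_eq_zero, ← sub_eq_zero (a := Ft),
    ← forall_ne_zero_add_div_smul_eq_zero_iff (a := Complex.I / 4) (by simp)]
  refine forall₂_congr fun k hk => ?_
  rw [zero_curvature_eq _ _ _ _ _ _ _ _ _ (I_div_four_mul_mul_I_mul hk), neg_eq_zero,
    neg_smul, ← sub_eq_add_neg, div_div]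

/-- **Zero-curvature ↔ matrix Maxwell–Bloch.**
Let `H, F` be matrix-valued functions with entrywise partial derivatives `Ht, Hx, Ft, Fx` at
`(t,x)`.  For `k ≠ 0` set `U = −(i k σ₃ + H)` and `V = i k σ₃ + H + (i/(4k))·F`.  Then the
zero-curvature condition `∂U/∂x − ∂V/∂t + [U,V] = 0` holds at `(t,x)` for every `k ≠ 0` iff the
matrix Maxwell–Bloch equations hold there: `Ht + Hx = (1/4)[σ₃, F]` and `Ft = [F, H]`. -/
theorem zero_curvature_iff_maxwell_bloch
    (H F : ℝ × ℝ → Matrix (Fin 2) (Fin 2) ℂ) (t x : ℝ)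
    (Ht Hx Ft Fx : Matrix (Fin 2) (Fin 2) ℂ)
    (hHt : ∀ i j, HasDerivAt (fun s => H (s, x) i j) (Ht i j) t)
    (hHx : ∀ i j, HasDerivAt (fun s => H (t, s) i j) (Hx i j) x)
    (hFt : ∀ i j, HasDerivAt (fun s => F (s, x) i j) (Ft i j) t)
    (hFx : ∀ i j, HasDerivAt (fun s => F (t, s) i j) (Fx i j) x) :
    (∀ k : ℂ, k ≠ 0 →
        (-Hx) - (Ht + (Complex.I / (4 * k)) • Ft)
          + ((-((Complex.I * k) • sigma3 + H (t, x)))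
                * ((Complex.I * k) • sigma3 + H (t, x) + (Complex.I / (4 * k)) • F (t, x))
              - ((Complex.I * k) • sigma3 + H (t, x) + (Complex.I / (4 * k)) • F (t, x))
                * (-((Complex.I * k) • sigma3 + H (t, x)))) = 0)
    ↔
    (Ht + Hx = (1/4 : ℂ) • (sigma3 * F (t, x) - F (t, x) * sigma3) ∧
      Ft = F (t, x) * H (t, x) - H (t, x) * F (t, x)) :=
  zero_curvature_iff_maxwell_bloch_general H F t x Ht Hx Ft
end

section
/- Let U, V : ℝ × ℝ → Matrix (Fin 2) (Fin 2) ℂ be continuously differentiable and satisfy the compatibility condition ∂U/∂x − ∂V/∂t + [U,V] = 0 at every point (t,x) ∈ ℝ². Let F : ℝ × ℝ → Matrix (Fin 2) (Fin 2) ℂ be twice continuously differentiable and satisfy the t-equation ∂F/∂t(t,x) = U(t,x)·F(t,x) for all (t,x). If for some t₀ ∈ ℝ the x-equation holds on the line t = t₀, i.e. ∂F/∂x(t₀,x) = V(t₀,x)·F(t₀,x) for all x ∈ ℝ, then the x-equation ∂F/∂x(t,x) = V(t,x)·F(t,x) holds for all (t,x) ∈ ℝ². -/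
/-!
For fixed `x`, the defect `G(t) = ∂F/∂x(t, x) - V(t, x) F(t, x)` of the `x`-equation satisfies the
linear equation `∂G/∂t = U G`: differentiating `∂F/∂t = U F` in `x` and using the symmetry of mixed
partial derivatives gives `∂ₜ∂ₓF = (∂U/∂x) F + U ∂F/∂x`, and the compatibility condition turns
`∂ₜ∂ₓF - ∂ₜ(V F)` into `U (∂F/∂x - V F)`. Since `G(t₀) = 0`, uniqueness for linear ODEs forces
`G ≡ 0`.
-/

open Set

section LinearODE

variable {E : Type*} [NormedAddCommGroup E] [NormedSpace ℝ E]

theorem eq_zero_of_hasDerivAt_clm_apply {A : ℝ → E →L[ℝ] E} (hA : Continuous A) {G : ℝ → E}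
    (hG : ∀ s, HasDerivAt G (A s (G s)) s) {t₀ : ℝ} (h₀ : G t₀ = 0) (t : ℝ) : G t = 0 := by
  set a := min t₀ t - 1
  set b := max t₀ t + 1
  have hI : ∀ s, min t₀ t ≤ s → s ≤ max t₀ t → s ∈ Ioo a b := fun s h₁ h₂ =>
    ⟨by linarith, by linarith⟩
  obtain ⟨C, hC⟩ := isCompact_Icc.exists_bound_of_continuousOn (hA.continuousOn (s := Icc a b))
  have hLip : ∀ s ∈ Ioo a b, LipschitzOnWith C.toNNReal (A s) univ := fun s hs =>
    ((A s).lipschitz.weaken (by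
      rw [← NNReal.coe_le_coe, coe_nnnorm]
      exact (hC s (Ioo_subset_Icc_self hs)).trans (Real.le_coe_toNNReal C))).lipschitzOnWith
  exact ODE_solution_unique_of_mem_Ioo hLip (hI t₀ (min_le_left _ _) (le_max_left _ _))
    (fun s _ => ⟨hG s, mem_univ _⟩)
    (fun s _ => ⟨by simpa using hasDerivAt_const s (0 : E), mem_univ (0 : E)⟩) h₀
    (hI t (min_le_right _ _) (le_max_right _ _))

end LinearODE

namespace Matrix

theorem hasDerivAt_mul_apply {𝔸 l m n : Type*} [NormedRing 𝔸] [NormedAlgebra ℝ 𝔸] [Fintype m]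
    {A : ℝ → Matrix l m 𝔸} {B : ℝ → Matrix m n 𝔸} {A' : Matrix l m 𝔸} {B' : Matrix m n 𝔸}
    {t : ℝ} (hA : ∀ i k, HasDerivAt (fun s => A s i k) (A' i k) t)
    (hB : ∀ k j, HasDerivAt (fun s => B s k j) (B' k j) t) (i : l) (j : n) :
    HasDerivAt (fun s => (A s * B s) i j) ((A' * B t + A t * B') i j) t := by
  simp only [mul_apply, add_apply, ← Finset.sum_add_distrib]
  exact HasDerivAt.fun_sum fun k _ => (hA i k).mul (hB k j)

section LinftyOpNorm

attribute [local instance] Matrix.linftyOpNormedAddCommGroup Matrix.linftyOpNormedSpace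
  Matrix.linftyOpNormedRing Matrix.linftyOpNormedAlgebra

theorem eq_zero_of_hasDerivAt_mul_left {𝕜 n : Type*} [RCLike 𝕜] [Fintype n] [DecidableEq n]
    {A G : ℝ → Matrix n n 𝕜} (hA : Continuous A)
    (hG : ∀ s i j, HasDerivAt (fun r => G r i j) ((A s * G s) i j) s)
    {t₀ : ℝ} (h₀ : G t₀ = 0) (t : ℝ) : G t = 0 := by
  -- In finite dimension `Matrix.of` is a continuous linear equivalence from the sup norm on
  -- entries to the operator norm, so the entrywise derivatives assemble into one.
  have hG' : ∀ s, HasDerivAt G (A s * G s) s := fun s => by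
    have hpi : HasDerivAt (fun r i j => G r i j) (fun i j => (A s * G s) i j) s :=
      hasDerivAt_pi.2 fun i => hasDerivAt_pi.2 fun j => hG s i j
    exact (ofLinearEquiv (m := n) (n := n) (α := 𝕜) ℝ).toContinuousLinearEquiv.hasFDerivAt
      |>.comp_hasDerivAt s hpi
  exact eq_zero_of_hasDerivAt_clm_apply (A := fun s => ContinuousLinearMap.mul ℝ _ (A s))
    ((ContinuousLinearMap.mul ℝ _).continuous.comp hA) hG' h₀ t

end LinftyOpNorm

end Matrix

section Slices

variable {E : Type*} [NormedAddCommGroup E] [NormedSpace ℝ E] {f : ℝ × ℝ → E}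
  {f' : ℝ × ℝ →L[ℝ] E} {t x : ℝ}

theorem HasFDerivAt.hasDerivAt_fst_slice (h : HasFDerivAt f f' (t, x)) :
    HasDerivAt (fun s => f (s, x)) (f' (1, 0)) t :=
  h.comp_hasDerivAt t ((hasDerivAt_id t).prodMk (hasDerivAt_const t x))

theorem HasFDerivAt.hasDerivAt_snd_slice (h : HasFDerivAt f f' (t, x)) :
    HasDerivAt (fun y => f (t, y)) (f' (0, 1)) x :=
  h.comp_hasDerivAt x ((hasDerivAt_const x t).prodMk (hasDerivAt_id x))

theorem ContDiff.hasDerivAt_deriv_snd_slice (hf : ContDiff ℝ 2 f) {g : ℝ → E} {c : E}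
    (hg : ∀ y, HasDerivAt (fun s => f (s, y)) (g y) t) (hc : HasDerivAt g c x) :
    HasDerivAt (fun s => deriv (fun y => f (s, y)) x) c t := by
  have hf₁ : Differentiable ℝ f := hf.differentiable two_ne_zero
  have hD : HasFDerivAt (fderiv ℝ f) (fderiv ℝ (fderiv ℝ f) (t, x)) (t, x) :=
    ((hf.fderiv_right (m := 1) (by norm_num)).differentiable one_ne_zero _).hasFDerivAt
  have hsymm := (hf.contDiffAt (x := (t, x))).isSymmSndFDerivAt
    (by simp [minSmoothness_of_isRCLikeNormedField]) (1, 0) (0, 1)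
  have hfx : (fun s => deriv (fun y => f (s, y)) x) = fun s => fderiv ℝ f (s, x) (0, 1) :=
    funext fun s => (hf₁ _).hasFDerivAt.hasDerivAt_snd_slice.deriv
  have hg_eq : g = fun y => fderiv ℝ f (t, y) (1, 0) :=
    funext fun y => (hg y).unique (hf₁ _).hasFDerivAt.hasDerivAt_fst_slice
  have hfxt : HasDerivAt (fun s => fderiv ℝ f (s, x) (0, 1))
      (fderiv ℝ (fderiv ℝ f) (t, x) (1, 0) (0, 1)) t :=
    ((ContinuousLinearMap.apply ℝ E ((0, 1) : ℝ × ℝ)).hasFDerivAt.comp _ hD).hasDerivAt_fst_slice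
  have hftx : HasDerivAt (fun y => fderiv ℝ f (t, y) (1, 0))
      (fderiv ℝ (fderiv ℝ f) (t, x) (0, 1) (1, 0)) x :=
    ((ContinuousLinearMap.apply ℝ E ((1, 0) : ℝ × ℝ)).hasFDerivAt.comp _ hD).hasDerivAt_snd_slice
  rw [hfx, hc.unique (hg_eq ▸ hftx), ← hsymm]
  exact hfxt

end Slices

section Partials

variable {𝔸 n : Type*} [NormedRing 𝔸] [NormedAlgebra ℝ 𝔸]

noncomputable def partialT (W : ℝ × ℝ → Matrix n n 𝔸) (t x : ℝ) : Matrix n n 𝔸 :=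
  Matrix.of fun i j => deriv (fun s => W (s, x) i j) t

noncomputable def partialX (W : ℝ × ℝ → Matrix n n 𝔸) (t x : ℝ) : Matrix n n 𝔸 :=
  Matrix.of fun i j => deriv (fun y => W (t, y) i j) x

variable {W : ℝ × ℝ → Matrix n n 𝔸}

theorem hasDerivAt_partialT_apply (hW : ∀ i j, Differentiable ℝ fun p => W p i j) (t x : ℝ)
    (i j : n) : HasDerivAt (fun s => W (s, x) i j) (partialT W t x i j) t :=
  (hW i j (t, x)).hasFDerivAt.hasDerivAt_fst_slice.differentiableAt.hasDerivAt

theorem hasDerivAt_partialX_apply (hW : ∀ i j, Differentiable ℝ fun p => W p i j) (t x : ℝ)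
    (i j : n) : HasDerivAt (fun y => W (t, y) i j) (partialX W t x i j) x :=
  (hW i j (t, x)).hasFDerivAt.hasDerivAt_snd_slice.differentiableAt.hasDerivAt

theorem hasDerivAt_partialX_sub_mul_apply [Fintype n] {U V F : ℝ × ℝ → Matrix n n 𝔸}
    (hU : ∀ i j, Differentiable ℝ fun p => U p i j)
    (hV : ∀ i j, Differentiable ℝ fun p => V p i j)
    (hF : ∀ i j, ContDiff ℝ 2 fun p => F p i j)
    (hcompat : ∀ t x,
      partialX U t x - partialT V t x + (U (t, x) * V (t, x) - V (t, x) * U (t, x)) = 0)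
    (hteq : ∀ t x i j, HasDerivAt (fun s => F (s, x) i j) ((U (t, x) * F (t, x)) i j) t)
    (x s : ℝ) (i j : n) :
    HasDerivAt (fun r => (partialX F r x - V (r, x) * F (r, x)) i j)
      ((U (s, x) * (partialX F s x - V (s, x) * F (s, x))) i j) s := by
  have hF₁ : ∀ i j, Differentiable ℝ fun p => F p i j := fun i j =>
    (hF i j).differentiable two_ne_zero
  have hFx : HasDerivAt (fun r => partialX F r x i j)
      ((partialX U s x * F (s, x) + U (s, x) * partialX F s x) i j) s :=
    (hF i j).hasDerivAt_deriv_snd_slice (fun y => hteq s y i j)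
      (Matrix.hasDerivAt_mul_apply (hasDerivAt_partialX_apply hU s x)
        (hasDerivAt_partialX_apply hF₁ s x) i j)
  have hVF : HasDerivAt (fun r => (V (r, x) * F (r, x)) i j)
      ((partialT V s x * F (s, x) + V (s, x) * (U (s, x) * F (s, x))) i j) s :=
    Matrix.hasDerivAt_mul_apply (hasDerivAt_partialT_apply hV s x) (hteq s x) i j
  have hUx : partialX U s x = partialT V s x - (U (s, x) * V (s, x) - V (s, x) * U (s, x)) := by
    rw [← sub_eq_zero, ← hcompat s x]
    abel
  have hderiv : partialX U s x * F (s, x) + U (s, x) * partialX F s x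
        - (partialT V s x * F (s, x) + V (s, x) * (U (s, x) * F (s, x)))
      = U (s, x) * (partialX F s x - V (s, x) * F (s, x)) := by
    rw [hUx]
    noncomm_ring
  exact (hFx.sub hVF).congr_deriv (congrFun₂ hderiv i j)

end Partials

/-- **Propagation lemma (Boutet de Monvel–Kotlyarov, Lemma 2.1).**
Let `U, V` be continuously differentiable matrix-valued functions satisfying the compatibility
condition `∂U/∂x − ∂V/∂t + [U,V] = 0` everywhere,  and let `F` be twice continuously
differentiable and satisfy the `t`-equation `∂F/∂t = U·F` everywhere.  If the `x`-equation
`∂F/∂x = V·F` holds on the line `t = t₀`, then it holds everywhere. -/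
theorem propagation_of_x_equation
    (U V F : ℝ × ℝ → Matrix (Fin 2) (Fin 2) ℂ)
    (hU : ∀ i j, ContDiff ℝ 1 (fun p : ℝ × ℝ => U p i j))
    (hV : ∀ i j, ContDiff ℝ 1 (fun p : ℝ × ℝ => V p i j))
    (hF : ∀ i j, ContDiff ℝ 2 (fun p : ℝ × ℝ => F p i j))
    (hcompat : ∀ t x : ℝ, ∀ i j,
      deriv (fun s => U (t, s) i j) x - deriv (fun s => V (s, x) i j) t
        + (U (t, x) * V (t, x) - V (t, x) * U (t, x)) i j = 0)
    (hteq : ∀ t x : ℝ, ∀ i j,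
      HasDerivAt (fun s => F (s, x) i j) ((U (t, x) * F (t, x)) i j) t)
    (t₀ : ℝ)
    (hxeq₀ : ∀ x : ℝ, ∀ i j,
      HasDerivAt (fun s => F (t₀, s) i j) ((V (t₀, x) * F (t₀, x)) i j) x) :
    ∀ t x : ℝ, ∀ i j,
      HasDerivAt (fun s => F (t, s) i j) ((V (t, x) * F (t, x)) i j) x := by
  intro t x
  have hU₁ : ∀ i j, Differentiable ℝ fun p => U p i j := fun i j =>
    (hU i j).differentiable one_ne_zero
  have hV₁ : ∀ i j, Differentiable ℝ fun p => V p i j := fun i j =>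
    (hV i j).differentiable one_ne_zero
  have hF₁ : ∀ i j, Differentiable ℝ fun p => F p i j := fun i j =>
    (hF i j).differentiable two_ne_zero
  have hUcont : Continuous fun s => U (s, x) := continuous_matrix fun i j =>
    (hU i j).continuous.comp (continuous_id.prodMk continuous_const)
  have hdefect₀ : partialX F t₀ x - V (t₀, x) * F (t₀, x) = 0 :=
    Matrix.ext fun i j => sub_eq_zero.2 (hxeq₀ x i j).deriv
  have hdefect := Matrix.eq_zero_of_hasDerivAt_mul_left hUcont
    (hasDerivAt_partialX_sub_mul_apply hU₁ hV₁ hF (fun t x => Matrix.ext (hcompat t x)) hteq x)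
    hdefect₀ t
  intro i j
  rw [← sub_eq_zero.1 (congrFun₂ hdefect i j)]
  exact hasDerivAt_partialX_apply hF₁ t x i j
end

section
/- Let r ∈ ℂ and θ ∈ ℝ, and let J be the 2×2 complex matrix with rows (1 + |r|², −r·e^{−2iθ}) and (−conj(r)·e^{2iθ}, 1). Then det J = 1, and the matrix J + conj(Jᵀ) is Hermitian positive definite: for every nonzero v ∈ ℂ², the quadratic form conj(v)ᵀ·(J + conj(Jᵀ))·v is a positive real number. -/
/-!
Writing `z = r e^{-2iθ}`, the jump matrix is `J(z) = [[1 + |z|², -z], [-z̄, 1]]`, which factors as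
`Bᴴ B` with `B = [[1, 0], [z̄, -1]]`. Since `det B = -1`, this gives `det J = |det B|² = 1`, and
`B` is injective, so `J` is positive definite; being Hermitian, `J + Jᴴ = 2 J` is positive
definite too.
-/

open Matrix ComplexConjugate ComplexOrder

lemma Matrix.PosDef.add_conjTranspose {n R : Type*} [Ring R] [PartialOrder R] [StarRing R]
    [AddLeftMono R] {M : Matrix n n R} (hM : M.PosDef) : (M + Mᴴ).PosDef := by
  rw [hM.isHermitian.eq]
  exact hM.add hM

noncomputable def jumpMatrix (z : ℂ) : Matrix (Fin 2) (Fin 2) ℂ :=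
  !![1 + (‖z‖ : ℂ) ^ 2, -z; -conj z, 1]

def jumpFactor (z : ℂ) : Matrix (Fin 2) (Fin 2) ℂ :=
  !![1, 0; conj z, -1]

lemma jumpMatrix_eq_conjTranspose_mul_self (z : ℂ) :
    jumpMatrix z = (jumpFactor z)ᴴ * jumpFactor z := by
  have hnorm : (‖z‖ : ℂ) ^ 2 = z * conj z := by
    rw [← Complex.ofReal_pow, Complex.sq_norm, Complex.mul_conj]
  ext i j
  fin_cases i <;> fin_cases j <;>
    simp [jumpMatrix, jumpFactor, mul_apply, conjTranspose_apply, hnorm]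

lemma det_jumpFactor (z : ℂ) : (jumpFactor z).det = -1 := by
  simp [jumpFactor, det_fin_two]

lemma det_jumpMatrix (z : ℂ) : (jumpMatrix z).det = 1 := by
  simp [jumpMatrix_eq_conjTranspose_mul_self, det_jumpFactor]

lemma posDef_jumpMatrix (z : ℂ) : (jumpMatrix z).PosDef := by
  rw [jumpMatrix_eq_conjTranspose_mul_self]
  exact .conjTranspose_mul_self _ (mulVec_injective_of_det_ne_zero (by simp [det_jumpFactor]))

lemma jumpMatrix_mul_exp (r : ℂ) (θ : ℝ) :
    jumpMatrix (r * Complex.exp (-2 * Complex.I * θ)) =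
      !![1 + (‖r‖ : ℂ) ^ 2, -r * Complex.exp (-2 * Complex.I * θ);
         -conj r * Complex.exp (2 * Complex.I * θ), 1] := by
  have hnorm : ‖Complex.exp (-(2 * Complex.I * θ))‖ = 1 := by
    simpa [mul_comm, mul_left_comm] using Complex.norm_exp_ofReal_mul_I (-2 * θ)
  have hconj : conj (Complex.exp (-(2 * Complex.I * θ))) = Complex.exp (2 * Complex.I * θ) := by
    rw [← Complex.exp_conj]
    simp [map_ofNat]
  simp [jumpMatrix, hnorm, hconj]

/-- **Positivity of the jump matrix (Zhou's Schwartz-reflection condition).**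
For `r ∈ ℂ` and `θ ∈ ℝ`, the jump matrix
`J = [[1 + |r|², −r·e^{−2iθ}], [−conj r·e^{2iθ}, 1]]` has determinant `1`, and `J + conj(Jᵀ)`
is positive definite: for every nonzero `v ∈ ℂ²` the quadratic form
`conj(v)ᵀ·(J + conj(Jᵀ))·v` is a positive real number. -/
theorem jump_matrix_positive_definite (r : ℂ) (θ : ℝ)
    (J : Matrix (Fin 2) (Fin 2) ℂ)
    (hJ : J = !![1 + (‖r‖ : ℂ) ^ 2, -r * Complex.exp (-2 * Complex.I * θ);
                 -(starRingEnd ℂ) r * Complex.exp (2 * Complex.I * θ), 1]) :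
    J.det = 1 ∧
    ∀ v : Fin 2 → ℂ, v ≠ 0 →
      0 < (dotProduct (star v) ((J + J.conjTranspose).mulVec v)).re ∧
      (dotProduct (star v) ((J + J.conjTranspose).mulVec v)).im = 0 := by
  rw [hJ, ← jumpMatrix_mul_exp]
  refine ⟨det_jumpMatrix _, fun v hv => ?_⟩
  obtain ⟨hre, him⟩ :=
    Complex.pos_iff.mp ((posDef_jumpMatrix _).add_conjTranspose.dotProduct_mulVec_pos hv)
  exact ⟨hre, him.symm⟩
end

section
/- Let γ ∈ ℝ and let y : ℝ → ℝ be a function for which there exists z₀ such that for all z ≥ z₀ one has y(z) > 1 and y(z) − γ·ln(y(z)) = z. Then, as z → +∞, y(z) − z − γ·ln z − γ²·(ln z)/z − γ³·(2·ln z − (ln z)²)/(2z²) = O((ln z)³ / z³). -/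
/-!
Put `v = y - z`, so that `v = γ log y`. Since `log y = o(y)` one gets `y ≤ 2z`, hence
`v = O(log z)`. With `u = v / z` the equation reads `v = γ (log z + log (1 + u))`, and feeding
the Taylor expansions of `log (1 + u)` of orders one, two and three back into it improves the
error successively to `O(log z / z)`, `O(log² z / z²)` and `O(log³ z / z³)`.
-/

open Real Filter Topology Asymptotics

theorem Real.isBigO_sum_range_add_log_one_add {α : Type*} {l : Filter α} {u : α → ℝ}
    (hu : Tendsto u l (𝓝 0)) (n : ℕ) :
    (fun x => (∑ i ∈ Finset.range n, (-u x) ^ (i + 1) / (i + 1)) + log (1 + u x)) =O[l]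
      fun x => u x ^ (n + 1) := by
  refine IsBigO.of_bound 2 ?_
  filter_upwards [hu.eventually (Metric.closedBall_mem_nhds 0 (by norm_num : (0:ℝ) < 1 / 2))]
    with x hx
  rw [dist_zero_right, norm_eq_abs] at hx
  have h := abs_log_sub_add_sum_range_le (x := -u x) (by rw [abs_neg]; linarith) n
  rw [sub_neg_eq_add, abs_neg] at h
  rw [norm_eq_abs, norm_eq_abs, abs_pow]
  calc _ ≤ |u x| ^ (n + 1) / (1 - |u x|) := h
    _ ≤ 2 * |u x| ^ (n + 1) := by
      rw [div_le_iff₀ (by linarith)]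
      nlinarith [pow_nonneg (abs_nonneg (u x)) (n + 1)]

noncomputable def logScale (a b : ℕ) (z : ℝ) : ℝ := log z ^ a / z ^ b

theorem logScale_mul (a b c d : ℕ) (z : ℝ) :
    logScale a b z * logScale c d z = logScale (a + c) (b + d) z := by
  simp only [logScale, pow_add, div_mul_div_comm]

theorem isBigO_logScale_of_le {a b c d : ℕ} (hac : a ≤ c) (hdb : d ≤ b) :
    logScale a b =O[atTop] logScale c d := by
  refine IsBigO.of_bound' ?_
  filter_upwards [eventually_ge_atTop (exp 1)] with z hz
  have hz1 : 1 ≤ z := (one_le_exp zero_le_one).trans hz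
  have hL : 1 ≤ log z := by rwa [le_log_iff_exp_le (by linarith)]
  rw [norm_eq_abs, norm_eq_abs, abs_of_nonneg (by unfold logScale; positivity),
    abs_of_nonneg (by unfold logScale; positivity)]
  exact div_le_div₀ (by positivity) (pow_le_pow_right₀ hL hac) (by positivity)
    (pow_le_pow_right₀ hz1 hdb)

theorem Asymptotics.IsBigO.mul_logScale {f g : ℝ → ℝ} {a b c d : ℕ}
    (hf : f =O[atTop] logScale a b) (hg : g =O[atTop] logScale c d) :
    (fun z => f z * g z) =O[atTop] logScale (a + c) (b + d) := by
  simpa only [logScale_mul] using hf.mul hg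

theorem isBigO_lambert_remainder {γ : ℝ} {v : ℝ → ℝ} (hv : v =O[atTop] log)
    (heq : ∀ᶠ z in atTop, v z = γ * (log z + log (1 + v z / z))) :
    (fun z => v z - γ * log z - γ ^ 2 * log z / z
      - γ ^ 3 * (2 * log z - log z ^ 2) / (2 * z ^ 2)) =O[atTop] logScale 3 3 := by
  have hu : (fun z => v z / z) =O[atTop] logScale 1 1 := by
    have hv' : v =O[atTop] logScale 1 0 := by unfold logScale; simpa using hv
    have hinv : (fun z : ℝ => z⁻¹) =O[atTop] logScale 0 1 := by
      unfold logScale; simpa using isBigO_refl (fun z : ℝ => z⁻¹) atTop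
    simpa [div_eq_mul_inv] using hv'.mul_logScale hinv
  have hu0 : Tendsto (fun z => v z / z) atTop (𝓝 0) :=
    hu.trans_tendsto <| by
      unfold logScale; simpa using isLittleO_log_id_atTop.tendsto_div_nhds_zero
  have hu2 : (fun z => (v z / z) ^ 2) =O[atTop] logScale 2 2 := by
    simpa only [sq] using hu.mul_logScale hu
  have hu3 : (fun z => (v z / z) ^ 3) =O[atTop] logScale 3 3 :=
    (hu2.mul_logScale hu).congr_left fun z => (pow_succ _ 2).symm
  have taylor := Real.isBigO_sum_range_add_log_one_add hu0
  have hd : (fun z => v z - γ * log z) =O[atTop] logScale 1 1 := by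
    refine (((taylor 0).trans (hu.pow 1)).const_mul_left γ).congr' ?_ ?_
    · filter_upwards [heq] with z hz
      simp only [Finset.range_zero, Finset.sum_empty, zero_add]
      linear_combination -hz
    · unfold logScale; simp
  have hd1 : (fun z => v z - γ * log z - γ ^ 2 * log z / z) =O[atTop] logScale 2 2 := by
    have h1 := ((taylor 1).trans hu2).const_mul_left γ
    have h2 := (hd.mul_logScale (isBigO_refl (logScale 0 1) atTop)).trans
      (isBigO_logScale_of_le (c := 2) (d := 2) (by norm_num) le_rfl)
    refine (h1.add (h2.const_mul_left γ)).congr' ?_ ?_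
    · filter_upwards [heq] with z hz
      simp only [logScale, Finset.sum_range_one]
      push_cast
      linear_combination -hz
    · unfold logScale; simp
  have hR := (taylor 2).trans hu3
  have h1 := (hd1.mul_logScale (isBigO_refl (logScale 0 1) atTop)).trans
    (isBigO_logScale_of_le (c := 3) (d := 3) (by norm_num) le_rfl)
  have h2 := ((isBigO_refl (logScale 1 2) atTop).mul_logScale hd).trans
    (isBigO_logScale_of_le (c := 3) (d := 3) (by norm_num) le_rfl)
  have h3 := ((hd.mul_logScale hd).mul_logScale (isBigO_refl (logScale 0 2) atTop)).trans
    (isBigO_logScale_of_le (c := 3) (d := 3) (by norm_num) (by norm_num))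
  -- With `d = v - γ log z`, `d₁ = d - γ² log z / z` and `R` the cubic Taylor remainder of
  -- `log (1 + u)`, the remainder is `γ d₁ / z - γ² d log z / z² - γ d² / (2 z²) + γ R`.
  refine ((((h1.const_mul_left γ).sub (h2.const_mul_left (γ ^ 2))).sub
    (h3.const_mul_left (γ / 2))).add (hR.const_mul_left γ)).congr' ?_ EventuallyEq.rfl
  filter_upwards [heq] with z hz
  simp only [logScale, Finset.sum_range_succ, Finset.sum_range_zero]
  push_cast
  linear_combination -hz

section LambertEquation

variable {γ : ℝ} {y : ℝ → ℝ}

theorem tendsto_atTop_of_sub_mul_log_eq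
    (hy : ∀ᶠ z in atTop, 1 < y z ∧ y z - γ * log (y z) = z) :
    Tendsto y atTop atTop := by
  refine tendsto_atTop_mono' _ ?_ (tendsto_id.atTop_div_const (by positivity : 0 < 1 + |γ|))
  filter_upwards [hy] with z ⟨hy1, hz⟩
  have hlog : log (y z) ≤ y z := (log_le_sub_one_of_pos (by linarith)).trans (by linarith)
  have hγ : -γ * log (y z) ≤ |γ| * y z := by
    nlinarith [neg_le_abs γ, log_pos hy1, abs_nonneg γ]
  rw [id_eq, div_le_iff₀ (by positivity)]
  linarith

theorem eventually_le_two_mul_of_sub_mul_log_eq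
    (hy : ∀ᶠ z in atTop, 1 < y z ∧ y z - γ * log (y z) = z) :
    ∀ᶠ z in atTop, y z ≤ 2 * z := by
  have hsmall := ((isLittleO_log_id_atTop.comp_tendsto
    (tendsto_atTop_of_sub_mul_log_eq hy)).const_mul_left γ).def (by norm_num : (0:ℝ) < 1 / 2)
  filter_upwards [hsmall, hy] with z hz ⟨hy1, heq⟩
  simp only [norm_eq_abs, Function.comp_apply, id_eq] at hz
  rw [abs_of_pos (by linarith : 0 < y z)] at hz
  linarith [le_abs_self (γ * log (y z))]

theorem isBigO_sub_log_of_sub_mul_log_eq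
    (hy : ∀ᶠ z in atTop, 1 < y z ∧ y z - γ * log (y z) = z) :
    (fun z => y z - z) =O[atTop] log := by
  have hlog : (fun z => log (y z)) =O[atTop] log := by
    refine IsBigO.of_bound 2 ?_
    filter_upwards [hy, eventually_le_two_mul_of_sub_mul_log_eq hy, eventually_ge_atTop 2]
      with z ⟨hy1, _⟩ hy2 hz
    rw [norm_eq_abs, norm_eq_abs, abs_of_pos (log_pos hy1), abs_of_pos (log_pos (by linarith))]
    calc log (y z) ≤ log (2 * z) := log_le_log (by linarith) hy2
      _ = log 2 + log z := log_mul two_ne_zero (by linarith)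
      _ ≤ 2 * log z := by linarith [log_le_log two_pos hz]
  refine (hlog.const_mul_left γ).congr' ?_ EventuallyEq.rfl
  filter_upwards [hy] with z ⟨_, hz⟩
  linarith

end LambertEquation

/-- **Lambert-type inversion lemma.**
Let `γ ∈ ℝ` and let `y : ℝ → ℝ` satisfy, for all sufficiently large `z`, `y z > 1` and
`y z − γ·ln(y z) = z`.  Then, as `z → +∞`,
`y z = z + γ·ln z + γ²·(ln z)/z + γ³·(2 ln z − ln²z)/(2z²) + O((ln z)³/z³)`. -/
theorem lambert_inversion
    (γ : ℝ) (y : ℝ → ℝ)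
    (h : ∃ z₀ : ℝ, ∀ z ≥ z₀, 1 < y z ∧ y z - γ * Real.log (y z) = z) :
    ∃ C > 0, ∃ Z : ℝ, ∀ z ≥ Z,
      |y z - z - γ * Real.log z - γ ^ 2 * Real.log z / z
          - γ ^ 3 * (2 * Real.log z - (Real.log z) ^ 2) / (2 * z ^ 2)|
        ≤ C * (Real.log z) ^ 3 / z ^ 3 := by
  have hy : ∀ᶠ z in atTop, 1 < y z ∧ y z - γ * log (y z) = z := eventually_atTop.2 h
  have heq : ∀ᶠ z in atTop, y z - z = γ * (log z + log (1 + (y z - z) / z)) := by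
    filter_upwards [hy, eventually_gt_atTop 0] with z ⟨hy1, hz⟩ hz0
    rw [show 1 + (y z - z) / z = y z / z by field_simp; ring, log_div (by linarith) hz0.ne']
    linarith
  obtain ⟨C, hC, hbound⟩ :=
    (isBigO_lambert_remainder (isBigO_sub_log_of_sub_mul_log_eq hy) heq).exists_pos
  obtain ⟨Z, hZ⟩ := eventually_atTop.1 (hbound.bound.and (eventually_ge_atTop 1))
  refine ⟨C, hC, Z, fun z hz => ?_⟩
  obtain ⟨hb, hz1⟩ := hZ z hz
  rwa [norm_eq_abs, norm_eq_abs, logScale,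
    abs_of_nonneg (div_nonneg (pow_nonneg (log_nonneg hz1) 3) (by positivity)),
    ← mul_div_assoc] at hb
end

section
/- Let m > 1 be real and n ∈ ℕ. For real t > x with x > 1 and x(t−x) > 1 define β(t,x) = (2√(x(t−x)) − m·ln x) / ln(√(x(t−x))). Then there exist C > 0 and x₀ > e^e such that for every x ≥ x₀ and every t > x satisfying m·ln x + (n−m)·ln(ln x) ≤ 2√(x(t−x)) ≤ m·ln x + (n−m+1/2)·ln(ln x), one has n − m − C/ln(ln x) ≤ β(t,x) ≤ n − m + 1/2 + C/ln(ln x). -/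
/-!
Write `ℓ = ln x`, `L = ln ℓ` and `S = √(x(t−x))`, so that `β = (2S − mℓ)/ln S` and the hypothesis
says `(n−m)·L ≤ 2S − mℓ ≤ (n−m+1/2)·L`. The hypothesis also pins `S` between `ℓ/(4(m+n))` and
`4(m+n)·ℓ`, hence `ln S = L + O(1)`. Replacing the denominator `ln S` by `L` therefore costs
only `O(1/L)` in the bounds on `β`.
-/

open Real

lemma log_le_half_self {y : ℝ} (hy : 0 < y) : log y ≤ y / 2 := by
  have hsplit : log y = log (y / 2) + log 2 := by
    rw [← log_mul (by positivity) two_ne_zero, div_mul_cancel₀ y two_ne_zero]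
  linarith [log_le_sub_one_of_pos (half_pos hy), log_two_lt_d9]

lemma abs_log_sub_log_le_log {c ℓ S : ℝ} (hc : 0 < c) (hℓ : 0 < ℓ)
    (hlo : ℓ / c ≤ S) (hhi : S ≤ c * ℓ) : |log S - log ℓ| ≤ log c := by
  have hS : 0 < S := (div_pos hℓ hc).trans_le hlo
  have h₁ : log S ≤ log c + log ℓ := by
    rw [← log_mul hc.ne' hℓ.ne']
    exact log_le_log hS hhi
  have h₂ : log ℓ - log c ≤ log S := by
    rw [← log_div hℓ.ne' hc.ne']
    exact log_le_log (div_pos hℓ hc) hlo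
  rw [abs_le]
  constructor <;> linarith

lemma sub_le_div_of_mul_le {a M D L P K : ℝ} (hL : 0 < L) (hP : L / 2 ≤ P) (hK : |P - L| ≤ K)
    (ha : |a| ≤ M) (h : a * L ≤ D) : a - 2 * K * M / L ≤ D / P := by
  have hP₀ : 0 < P := by linarith
  have hK₀ : 0 ≤ K := (abs_nonneg _).trans hK
  have hM₀ : 0 ≤ M := (abs_nonneg a).trans ha
  have hnum : -(K * M) ≤ D - a * P := by
    have : a * (P - L) ≤ K * M :=
      calc a * (P - L) ≤ |a| * |P - L| := (le_abs_self _).trans (abs_mul a (P - L)).le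
        _ ≤ M * K := by gcongr
        _ = K * M := mul_comm M K
    linarith
  calc a - 2 * K * M / L = a - K * M / (L / 2) := by field_simp
    _ ≤ a - K * M / P := by gcongr
    _ = a + -(K * M) / P := by ring
    _ ≤ a + (D - a * P) / P := by gcongr
    _ = D / P := by field_simp; ring

lemma div_le_add_of_le_mul {b M D L P K : ℝ} (hL : 0 < L) (hP : L / 2 ≤ P) (hK : |P - L| ≤ K)
    (hb : |b| ≤ M) (h : D ≤ b * L) : D / P ≤ b + 2 * K * M / L := by
  have := sub_le_div_of_mul_le (a := -b) (M := M) (D := -D) hL hP hK (by rwa [abs_neg])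
    (by linarith)
  rw [neg_div] at this
  linarith

lemma div_le_and_le_mul_of_strip {m n ℓ L S : ℝ} (hm : 1 < m) (hn : 0 ≤ n) (hL : 0 < L)
    (hLℓ : L ≤ ℓ / 2) (hlo : m * ℓ + (n - m) * L ≤ 2 * S)
    (hhi : 2 * S ≤ m * ℓ + (n - m + 1 / 2) * L) :
    ℓ / (4 * (m + n)) ≤ S ∧ S ≤ 4 * (m + n) * ℓ := by
  have hℓ : 0 < ℓ := by linarith
  have hmℓ : m * ℓ / 4 ≤ S := by nlinarith
  constructor
  · calc ℓ / (4 * (m + n)) ≤ ℓ / 4 := by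
          gcongr; nlinarith
      _ ≤ m * ℓ / 4 := by gcongr; nlinarith
      _ ≤ S := hmℓ
  · nlinarith

/-- **Bounds on the exponent `β(t,x)` (first half of the domain).**
Let `m > 1` and `n ∈ ℕ`.  With `β(t,x) = (2√(x(t−x)) − m·ln x)/ln(√(x(t−x)))`, there are
`C > 0` and `x₀ > e^e` such that for all `x ≥ x₀` and `t > x` with
`m·ln x + (n−m)·ln ln x ≤ 2√(x(t−x)) ≤ m·ln x + (n−m+1/2)·ln ln x`, one has
`n − m − C/ln ln x ≤ β(t,x) ≤ n − m + 1/2 + C/ln ln x`. -/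
theorem beta_bounds_first_half (m : ℝ) (hm : 1 < m) (n : ℕ) :
    ∃ C > 0, ∃ x₀ > Real.exp (Real.exp 1), ∀ x ≥ x₀, ∀ t > x,
      (m * Real.log x + ((n : ℝ) - m) * Real.log (Real.log x)
          ≤ 2 * Real.sqrt (x * (t - x)) ∧
        2 * Real.sqrt (x * (t - x))
          ≤ m * Real.log x + ((n : ℝ) - m + 1/2) * Real.log (Real.log x)) →
      ((n : ℝ) - m - C / Real.log (Real.log x)
          ≤ (2 * Real.sqrt (x * (t - x)) - m * Real.log x)
              / Real.log (Real.sqrt (x * (t - x))) ∧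
        (2 * Real.sqrt (x * (t - x)) - m * Real.log x)
              / Real.log (Real.sqrt (x * (t - x)))
          ≤ (n : ℝ) - m + 1/2 + C / Real.log (Real.log x)) := by
  have hn : (0 : ℝ) ≤ n := n.cast_nonneg
  set K := log (4 * (m + n))
  have hK : 0 < K := log_pos (by linarith)
  refine ⟨2 * K * (n + m + 1), by positivity, exp (exp (2 * K + 1)), by gcongr; linarith, ?_⟩
  rintro x hx t - ⟨hlo, hhi⟩
  have hℓ : exp (2 * K + 1) ≤ log x := (le_log_iff_exp_le ((exp_pos _).trans_le hx)).2 hx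
  have hL : 2 * K + 1 ≤ log (log x) := (le_log_iff_exp_le ((exp_pos _).trans_le hℓ)).2 hℓ
  have hℓ₀ : 0 < log x := (exp_pos _).trans_le hℓ
  have hL₀ : 0 < log (log x) := by linarith
  obtain ⟨hS₁, hS₂⟩ := div_le_and_le_mul_of_strip hm hn hL₀ (log_le_half_self hℓ₀) hlo hhi
  have hPL := abs_log_sub_log_le_log (by positivity) hℓ₀ hS₁ hS₂
  have hP : log (log x) / 2 ≤ log √(x * (t - x)) := by linarith [(abs_le.1 hPL).1]
  constructor
  · exact sub_le_div_of_mul_le hL₀ hP hPL (abs_le.2 ⟨by linarith, by linarith⟩) (by linarith)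
  · exact div_le_add_of_le_mul hL₀ hP hPL (abs_le.2 ⟨by linarith, by linarith⟩) (by linarith)
end

section
/- Let m > 1 be real and n ∈ ℕ with n ≥ 1. For real t > x with x > 1 and x(t−x) > 1 define β(t,x) = (2√(x(t−x)) − m·ln x) / ln(√(x(t−x))). Then there exist C > 0 and x₀ > e^e such that for every x ≥ x₀ and every t > x satisfying m·ln x + (n−m−1/2)·ln(ln x) ≤ 2√(x(t−x)) ≤ m·ln x + (n−m)·ln(ln x), one has n − m − 1/2 − C/ln(ln x) ≤ β(t,x) ≤ n − m + C/ln(ln x). -/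
/-!
On the band, `2√(x(t−x)) − m ln x` lies between `(n−m−1/2) ln ln x` and `(n−m) ln ln x`. Since
`ln ln x = o(ln x)`, this forces `ln x ≤ 2√(x(t−x)) ≤ (m + K) ln x` for a constant `K`, so
`ln √(x(t−x)) = ln ln x + O(1)`, and dividing the band by `ln √(x(t−x))` instead of `ln ln x`
costs only `O(1 / ln ln x)`.
-/

open Real Filter

lemma abs_log_sub_log_le {s L A : ℝ} (hL : 0 < L) (hlow : L ≤ 2 * s) (hup : 2 * s ≤ A * L) :
    |log s - log L| ≤ log (2 * A) := by
  have hs : 0 < s := by linarith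
  have hA : 1 ≤ A := le_of_mul_le_mul_right (by linarith) hL
  have hlog2s : log (2 * s) = log 2 + log s := log_mul two_ne_zero hs.ne'
  have hlow' : log L ≤ log (2 * s) := log_le_log hL hlow
  have hup' : log (2 * s) ≤ log A + log L := by
    rw [← log_mul (by linarith) hL.ne']
    exact log_le_log (by linarith) hup
  have hlog2 : 0 ≤ log 2 := log_nonneg one_le_two
  have hlogA : 0 ≤ log A := log_nonneg hA
  rw [log_mul two_ne_zero (by linarith), abs_le]
  constructor <;> linarith

lemma abs_mul_div_sub_le {a ℓ D c : ℝ} (hD : |D - ℓ| ≤ c) (hℓ : 2 * c ≤ ℓ) (hℓ0 : 0 < ℓ) :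
    |a * ℓ / D - a| ≤ 2 * c * |a| / ℓ := by
  have hD' := abs_le.1 hD
  have hc : 0 ≤ c := (abs_nonneg _).trans hD
  have hDℓ : ℓ / 2 ≤ D := by linarith
  have hD0 : 0 < D := by linarith
  calc |a * ℓ / D - a| = |a| * |D - ℓ| / D := by
        rw [show a * ℓ / D - a = -(a * (D - ℓ)) / D by field_simp; ring,
          abs_div, abs_neg, abs_mul, abs_of_pos hD0]
    _ ≤ |a| * c / (ℓ / 2) := by gcongr
    _ = 2 * c * |a| / ℓ := by field_simp

lemma sub_le_div_and_div_le_add {a b y ℓ D c K : ℝ} (ha : |a| ≤ K) (hb : |b| ≤ K)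
    (hD : |D - ℓ| ≤ c) (hℓ : 2 * c ≤ ℓ) (hℓ0 : 0 < ℓ) (hya : a * ℓ ≤ y) (hyb : y ≤ b * ℓ) :
    a - 2 * c * K / ℓ ≤ y / D ∧ y / D ≤ b + 2 * c * K / ℓ := by
  have hc : 0 ≤ c := (abs_nonneg _).trans hD
  have hD0 : 0 < D := by linarith [(abs_le.1 hD).1]
  have hKa : 2 * c * |a| / ℓ ≤ 2 * c * K / ℓ := by gcongr
  have hKb : 2 * c * |b| / ℓ ≤ 2 * c * K / ℓ := by gcongr
  have hA := abs_le.1 (abs_mul_div_sub_le (a := a) hD hℓ hℓ0)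
  have hB := abs_le.1 (abs_mul_div_sub_le (a := b) hD hℓ hℓ0)
  have hya' : a * ℓ / D ≤ y / D := by gcongr
  have hyb' : y / D ≤ b * ℓ / D := by gcongr
  constructor <;> linarith

lemma le_two_mul_and_two_mul_le {m K a b L s : ℝ} (ha : |a| ≤ K) (hb : |b| ≤ K) (hL : 0 < L)
    (hℓ : 0 ≤ log L) (hsmall : K * log L ≤ (m - 1) * L)
    (hlow : m * L + a * log L ≤ 2 * s) (hup : 2 * s ≤ m * L + b * log L) :
    L ≤ 2 * s ∧ 2 * s ≤ (m + K) * L := by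
  have hℓL : log L ≤ L := by linarith [log_le_sub_one_of_pos hL]
  have hK : 0 ≤ K := (abs_nonneg _).trans ha
  have haℓ : -K * log L ≤ a * log L := by gcongr; linarith [(abs_le.1 ha).1]
  have hbℓ : b * log L ≤ K * L := by
    calc b * log L ≤ K * log L := by gcongr; exact (abs_le.1 hb).2
      _ ≤ K * L := by gcongr
  constructor <;> linarith

lemma eventually_mul_log_log_le (a : ℝ) {b : ℝ} (hb : 0 < b) :
    ∀ᶠ x in atTop, a * log (log x) ≤ b * log x := by
  have hε : 0 < b / (|a| + 1) := by positivity
  filter_upwards [tendsto_log_atTop.eventually ((isLittleO_log_id_atTop.def hε)),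
    tendsto_log_atTop.eventually_gt_atTop 0] with x hx hx0
  simp only [id, norm_eq_abs, abs_of_pos hx0] at hx
  calc a * log (log x) ≤ |a| * |log (log x)| := by rw [← abs_mul]; exact le_abs_self _
    _ ≤ (|a| + 1) * |log (log x)| := by gcongr; linarith
    _ ≤ (|a| + 1) * (b / (|a| + 1) * log x) := by gcongr
    _ = b * log x := by field_simp

theorem beta_bounds_second_half_general (m : ℝ) (hm : 1 < m) (n : ℕ) :
    ∃ C > 0, ∃ x₀ > Real.exp (Real.exp 1), ∀ x ≥ x₀, ∀ t > x,
      (m * Real.log x + ((n : ℝ) - m - 1/2) * Real.log (Real.log x)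
          ≤ 2 * Real.sqrt (x * (t - x)) ∧
        2 * Real.sqrt (x * (t - x))
          ≤ m * Real.log x + ((n : ℝ) - m) * Real.log (Real.log x)) →
      ((n : ℝ) - m - 1/2 - C / Real.log (Real.log x)
          ≤ (2 * Real.sqrt (x * (t - x)) - m * Real.log x)
              / Real.log (Real.sqrt (x * (t - x))) ∧
        (2 * Real.sqrt (x * (t - x)) - m * Real.log x)
              / Real.log (Real.sqrt (x * (t - x)))
          ≤ (n : ℝ) - m + C / Real.log (Real.log x)) := by
  set K := |(n : ℝ) - m - 1/2| + |(n : ℝ) - m| + 1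
  have ha : |(n : ℝ) - m - 1/2| ≤ K := by linarith [abs_nonneg ((n : ℝ) - m)]
  have hb : |(n : ℝ) - m| ≤ K := by linarith [abs_nonneg ((n : ℝ) - m - 1/2)]
  set c := log (2 * (m + K))
  have hc : 0 < c := log_pos (by linarith [abs_nonneg ((n : ℝ) - m)])
  obtain ⟨N, hN⟩ := eventually_atTop.1 <|
    (eventually_mul_log_log_le K (by linarith : 0 < m - 1)).and <|
    (tendsto_log_atTop.eventually_gt_atTop 0).and <|
    tendsto_log_atTop.eventually (tendsto_log_atTop.eventually_ge_atTop (2 * c))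
  refine ⟨2 * c * K, by positivity, max N (exp (exp 1) + 1), by simp,
    fun x hx t _ ⟨hlow, hup⟩ ↦ ?_⟩
  obtain ⟨hsmall, hL, hℓ⟩ := hN x (le_of_max_le_left hx)
  have hs := le_two_mul_and_two_mul_le ha hb hL (by linarith) hsmall hlow hup
  exact sub_le_div_and_div_le_add ha hb (abs_log_sub_log_le hL hs.1 hs.2) hℓ
    (by linarith) (by linarith) (by linarith)

/-- **Bounds on the exponent `β(t,x)` (second half of the domain).**
Let `m > 1` and `n ∈ ℕ`, `n ≥ 1`.  With `β(t,x) = (2√(x(t−x)) − m·ln x)/ln(√(x(t−x)))`, there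
are `C > 0` and `x₀ > e^e` such that for all `x ≥ x₀` and `t > x` with
`m·ln x + (n−m−1/2)·ln ln x ≤ 2√(x(t−x)) ≤ m·ln x + (n−m)·ln ln x`, one has
`n − m − 1/2 − C/ln ln x ≤ β(t,x) ≤ n − m + C/ln ln x`. -/
theorem beta_bounds_second_half (m : ℝ) (hm : 1 < m) (n : ℕ) (hn : 1 ≤ n) :
    ∃ C > 0, ∃ x₀ > Real.exp (Real.exp 1), ∀ x ≥ x₀, ∀ t > x,
      (m * Real.log x + ((n : ℝ) - m - 1/2) * Real.log (Real.log x)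
          ≤ 2 * Real.sqrt (x * (t - x)) ∧
        2 * Real.sqrt (x * (t - x))
          ≤ m * Real.log x + ((n : ℝ) - m) * Real.log (Real.log x)) →
      ((n : ℝ) - m - 1/2 - C / Real.log (Real.log x)
          ≤ (2 * Real.sqrt (x * (t - x)) - m * Real.log x)
              / Real.log (Real.sqrt (x * (t - x))) ∧
        (2 * Real.sqrt (x * (t - x)) - m * Real.log x)
              / Real.log (Real.sqrt (x * (t - x)))
          ≤ (n : ℝ) - m + C / Real.log (Real.log x)) :=
  beta_bounds_second_half_general m hm n
end

section
/- Let m > 1 and ε₁ > 0 be real. For t > x > 1 define p₁(t,x) = m·ln x − m·ln(√(x(t−x))) − 2√(x(t−x)). Then there exist C > 0 and x₀ > e such that for every x ≥ x₀ and every t satisfying x + 1/x ≤ t ≤ x + (1/(4x))·(m·ln x − (m+ε₁)·ln(ln x))², one has e^{−p₁(t,x)} ≤ C·(ln x)^{−ε₁}. -/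
/-!
Write `s = √(x(t−x))`, `ℓ = ln x` and `L = mℓ − (m+ε₁) ln ℓ`, so that `−p₁ = m ln s + 2s − mℓ`.
The constraint on `t` gives `0 < s ≤ L/2` once `L ≥ 0`, and `L ≤ mℓ`. Hence `2s ≤ L` and
`m ln s ≤ m ln (mℓ/2)`, which add up to `−p₁ ≤ m ln (m/2) − ε₁ ln ℓ`, i.e.
`e^{−p₁} ≤ (m/2)^m ℓ^{−ε₁}`. The threshold `x₀` only has to make `L ≥ 0` and `ℓ ≥ 1`.
-/

open Real Filter

lemma eventually_mul_log_le_mul (c : ℝ) {m : ℝ} (hm : 0 < m) :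
    ∀ᶠ y in atTop, c * log y ≤ m * y := by
  filter_upwards [(isLittleO_log_id_atTop.const_mul_left c).def hm, eventually_ge_atTop 0]
    with y hy hy0
  simpa [abs_of_nonneg hy0] using (le_abs_self _).trans hy

lemma two_mul_sqrt_mul_sub_le {x t L : ℝ} (hx : 0 < x) (hL : 0 ≤ L)
    (ht : t ≤ x + 1 / (4 * x) * L ^ 2) :
    2 * √(x * (t - x)) ≤ L := by
  have hu : x * (t - x) ≤ (L / 2) ^ 2 := by
    calc x * (t - x) ≤ x * (1 / (4 * x) * L ^ 2) := by gcongr; linarith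
      _ = (L / 2) ^ 2 := by field_simp; ring
  have := sqrt_le_sqrt hu
  rw [sqrt_sq (by linarith)] at this
  linarith

lemma mul_log_add_two_mul_sub_le {m ε ℓ s : ℝ} (hm : 0 < m) (hmε : 0 ≤ m + ε) (hℓ : 1 ≤ ℓ)
    (hs : 0 < s) (hsL : 2 * s ≤ m * ℓ - (m + ε) * log ℓ) :
    m * log s + 2 * s - m * ℓ ≤ m * log (m / 2) - ε * log ℓ := by
  have hlogℓ : 0 ≤ log ℓ := log_nonneg hℓ
  have hs_le : s ≤ m / 2 * ℓ := by linarith [mul_nonneg hmε hlogℓ]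
  have hlog_s : log s ≤ log (m / 2) + log ℓ := by
    rw [← log_mul (by positivity) (by positivity)]
    exact log_le_log hs hs_le
  linarith [mul_le_mul_of_nonneg_left hlog_s hm.le]

lemma exp_mul_log_add_two_mul_sub_le {m ε ℓ s : ℝ} (hm : 0 < m) (hmε : 0 ≤ m + ε)
    (hℓ : 1 ≤ ℓ) (hs : 0 < s) (hsL : 2 * s ≤ m * ℓ - (m + ε) * log ℓ) :
    exp (m * log s + 2 * s - m * ℓ) ≤ (m / 2) ^ m * ℓ ^ (-ε) := by
  rw [rpow_def_of_pos (by positivity), rpow_def_of_pos (by linarith), ← exp_add, exp_le_exp]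
  linarith [mul_log_add_two_mul_sub_le hm hmε hℓ hs hsL]

/-- **Smallness of `e^{−p₁}` in the near-light-cone region (part II).**
Let `m > 1` and `ε₁ > 0`.  With `p₁(t,x) = m·ln x − m·ln√(x(t−x)) − 2√(x(t−x))`, there are
`C > 0` and `x₀ > e` such that for all `x ≥ x₀` and all `t` with
`x + 1/x ≤ t ≤ x + (1/(4x))·(m·ln x − (m+ε₁)·ln ln x)²`, one has
`e^{−p₁(t,x)} ≤ C·(ln x)^{−ε₁}`. -/
theorem exp_neg_p1_small (m ε₁ : ℝ) (hm : 1 < m) (hε : 0 < ε₁) :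
    ∃ C > 0, ∃ x₀ > Real.exp 1, ∀ x ≥ x₀, ∀ t : ℝ,
      (x + 1 / x ≤ t ∧
        t ≤ x + (1 / (4 * x))
              * (m * Real.log x - (m + ε₁) * Real.log (Real.log x)) ^ 2) →
      Real.exp (-(m * Real.log x - m * Real.log (Real.sqrt (x * (t - x)))
          - 2 * Real.sqrt (x * (t - x))))
        ≤ C * Real.log x ^ (-ε₁) := by
  have hm0 : 0 < m := by linarith
  obtain ⟨x₁, hx₁⟩ := eventually_atTop.mp
    (tendsto_log_atTop.eventually (eventually_mul_log_le_mul (m + ε₁) hm0))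
  refine ⟨(m / 2) ^ m, by positivity, max x₁ (exp 1 + 1), by simp, ?_⟩
  rintro x hx t ⟨ht_lo, ht_hi⟩
  have hex : exp 1 < x := by linarith [le_max_right x₁ (exp 1 + 1)]
  have hx0 : 0 < x := (exp_pos 1).trans hex
  have hℓ : 1 ≤ log x := ((lt_log_iff_exp_lt hx0).mpr hex).le
  have hL : 0 ≤ m * log x - (m + ε₁) * log (log x) :=
    sub_nonneg.mpr (hx₁ x (le_of_max_le_left hx))
  have hs : 0 < √(x * (t - x)) :=
    sqrt_pos.mpr (mul_pos hx0 (by linarith [one_div_pos.mpr hx0]))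
  convert exp_mul_log_add_two_mul_sub_le hm0 (by linarith) hℓ hs
    (two_mul_sqrt_mul_sub_le hx0 hL ht_hi) using 2
  ring
end

section
/- Let m > 1, ε₂ ∈ (0, 1/2), and K ≥ m be real numbers. For t > x > 1 define p₂(t,x) = m·ln x − 2√(x(t−x)) − (m − 1/2)·ln(√(x(t−x))). Then there exist C > 0 and x₀ > e such that for every x ≥ x₀ and every t satisfying x + (1/(4x))·(m·ln x − K·ln(ln x))² ≤ t ≤ x + (1/(4x))·(m·ln x − (m+ε₂−1/2)·ln(ln x))², both estimates hold: e^{−p₂(t,x)} ≤ C·(ln x)^{−ε₂} and e^{p₂(t,x)} ≤ C·(ln x)^{K−m+1/2}. -/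
/-!
Write `L = ln x` and `s = √(x(t-x))`. The constraint on `t` says exactly that `s` lies between
`(m L - K ln L)/2` and `(m L - (m+ε₂-1/2) ln L)/2`, and since `ln ln x = o(ln x)` both ends are
comparable to `L`. In `e^{∓p₂} = e^{±(2s - mL)} · s^{±(m-1/2)}` the exponential factor is then
bounded through the appropriate end of the window by a power of `L`, and so is the power of `s`.
-/

open Real Filter

theorem eventually_abs_mul_log_log_le (c : ℝ) {ε : ℝ} (hε : 0 < ε) :
    ∀ᶠ x : ℝ in atTop, |c * log (log x)| ≤ ε * log x := by
  filter_upwards [tendsto_log_atTop.eventually ((isLittleO_log_id_atTop.const_mul_left c).bound hε),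
    tendsto_log_atTop.eventually_ge_atTop 0] with x hbound hlog
  simpa [abs_of_nonneg hlog] using hbound

theorem half_le_sqrt_mul_sub_iff {x t B : ℝ} (hx : 0 < x) (hB : 0 < B) :
    B / 2 ≤ √(x * (t - x)) ↔ x + 1 / (4 * x) * B ^ 2 ≤ t := by
  have h : x * (t - x) - (B / 2) ^ 2 = x * (t - (x + 1 / (4 * x) * B ^ 2)) := by
    field_simp; ring
  rw [le_sqrt' (by positivity), ← sub_nonneg, h, ← sub_nonneg (b := x + _)]
  exact mul_nonneg_iff_of_pos_left hx

theorem sqrt_mul_sub_le_half_iff {x t D : ℝ} (hx : 0 < x) (hD : 0 ≤ D) :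
    √(x * (t - x)) ≤ D / 2 ↔ t ≤ x + 1 / (4 * x) * D ^ 2 := by
  have h : (D / 2) ^ 2 - x * (t - x) = x * (x + 1 / (4 * x) * D ^ 2 - t) := by
    field_simp; ring
  rw [sqrt_le_left (by positivity), ← sub_nonneg, h, ← sub_nonneg (a := x + _)]
  exact mul_nonneg_iff_of_pos_left hx

theorem exp_neg_le_rpow_of_le {m a b κ L s : ℝ} (ha : 0 ≤ a) (hL : 0 < L) (hs : 0 < s)
    (hsκ : s ≤ κ * L) (h2s : 2 * s ≤ m * L - b * log L) :
    exp (-(m * L - 2 * s - a * log s)) ≤ κ ^ a * L ^ (a - b) := by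
  have hκ : 0 < κ := pos_of_mul_pos_left (hs.trans_le hsκ) hL.le
  have hlog : log s ≤ log κ + log L := by
    rw [← log_mul hκ.ne' hL.ne']; exact log_le_log hs hsκ
  rw [rpow_def_of_pos hκ, rpow_def_of_pos hL, ← exp_add, exp_le_exp]
  nlinarith [mul_le_mul_of_nonneg_left hlog ha]

theorem exp_le_rpow_of_le {m a b κ L s : ℝ} (ha : 0 ≤ a) (hL : 0 < L) (hκ : 0 < κ)
    (hsκ : κ * L ≤ s) (h2s : m * L - b * log L ≤ 2 * s) :
    exp (m * L - 2 * s - a * log s) ≤ κ ^ (-a) * L ^ (b - a) := by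
  have hlog : log κ + log L ≤ log s := by
    rw [← log_mul hκ.ne' hL.ne']; exact log_le_log (by positivity) hsκ
  rw [rpow_def_of_pos hκ, rpow_def_of_pos hL, ← exp_add, exp_le_exp]
  nlinarith [mul_le_mul_of_nonneg_left hlog ha]

theorem exp_p2_two_sided_general (m ε₂ K : ℝ) (hm : 1 < m) :
    ∃ C > 0, ∃ x₀ > Real.exp 1, ∀ x ≥ x₀, ∀ t : ℝ,
      (x + (1 / (4 * x)) * (m * Real.log x - K * Real.log (Real.log x)) ^ 2 ≤ t ∧
        t ≤ x + (1 / (4 * x))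
              * (m * Real.log x - (m + ε₂ - 1/2) * Real.log (Real.log x)) ^ 2) →
      (Real.exp (-(m * Real.log x - 2 * Real.sqrt (x * (t - x))
            - (m - 1/2) * Real.log (Real.sqrt (x * (t - x)))))
          ≤ C * Real.log x ^ (-ε₂) ∧
        Real.exp (m * Real.log x - 2 * Real.sqrt (x * (t - x))
            - (m - 1/2) * Real.log (Real.sqrt (x * (t - x))))
          ≤ C * Real.log x ^ (K - m + 1/2)) := by
  have hm0 : 0 < m := by linarith
  have ha : 0 ≤ m - 1/2 := by linarith
  -- once `|c ln ln x| ≤ (m/2) ln x` for both coefficients, `s` lies in `[mL/4, 3mL/4]`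
  obtain ⟨x₀, hx₀⟩ := eventually_atTop.1 <|
    (tendsto_log_atTop.eventually_gt_atTop 0).and <|
      (eventually_abs_mul_log_log_le K (half_pos hm0)).and
        (eventually_abs_mul_log_log_le (m + ε₂ - 1/2) (half_pos hm0))
  refine ⟨(3 * m / 4) ^ (m - 1/2) + (m / 4) ^ (-(m - 1/2)), by positivity, max x₀ (exp 2),
    (exp_lt_exp.2 one_lt_two).trans_le (le_max_right _ _), fun x hx t ht => ?_⟩
  obtain ⟨hL, hK, hε⟩ := hx₀ x (le_of_max_le_left hx)
  have hx0 : 0 < x := (exp_pos 2).trans_le (le_of_max_le_right hx)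
  set L := log x
  have hmL : 0 < m * L := mul_pos hm0 hL
  obtain ⟨-, hKu⟩ := abs_le.1 hK
  obtain ⟨hεl, hεu⟩ := abs_le.1 hε
  have hlo := (half_le_sqrt_mul_sub_iff hx0 (by linarith)).2 ht.1
  have hhi := (sqrt_mul_sub_le_half_iff hx0 (by linarith)).2 ht.2
  constructor
  · calc _ ≤ (3 * m / 4) ^ (m - 1/2) * L ^ (m - 1/2 - (m + ε₂ - 1/2)) :=
          exp_neg_le_rpow_of_le ha hL (by linarith) (by linarith) (by linarith)
      _ ≤ _ := by
          rw [show m - 1/2 - (m + ε₂ - 1/2) = -ε₂ by ring]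
          gcongr
          exact le_add_of_nonneg_right (by positivity)
  · calc _ ≤ (m / 4) ^ (-(m - 1/2)) * L ^ (K - (m - 1/2)) :=
          exp_le_rpow_of_le ha hL (by positivity) (by linarith) (by linarith)
      _ ≤ _ := by
          rw [show K - (m - 1/2) = K - m + 1/2 by ring]
          gcongr
          exact le_add_of_nonneg_left (by positivity)

/-- **Two-sided control of `e^{±p₂}` in the near-light-cone region (part III).**
Let `m > 1`, `ε₂ ∈ (0, 1/2)`, `K ≥ m`.  With
`p₂(t,x) = m·ln x − 2√(x(t−x)) − (m−1/2)·ln√(x(t−x))`, there are `C > 0` and `x₀ > e` such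
that for all `x ≥ x₀` and all `t` with
`x + (1/(4x))·(m·ln x − K·ln ln x)² ≤ t ≤ x + (1/(4x))·(m·ln x − (m+ε₂−1/2)·ln ln x)²`,
one has `e^{−p₂(t,x)} ≤ C·(ln x)^{−ε₂}` and `e^{p₂(t,x)} ≤ C·(ln x)^{K−m+1/2}`. -/
theorem exp_p2_two_sided (m ε₂ K : ℝ) (hm : 1 < m)
    (hε0 : 0 < ε₂) (hε1 : ε₂ < 1/2) (hK : m ≤ K) :
    ∃ C > 0, ∃ x₀ > Real.exp 1, ∀ x ≥ x₀, ∀ t : ℝ,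
      (x + (1 / (4 * x)) * (m * Real.log x - K * Real.log (Real.log x)) ^ 2 ≤ t ∧
        t ≤ x + (1 / (4 * x))
              * (m * Real.log x - (m + ε₂ - 1/2) * Real.log (Real.log x)) ^ 2) →
      (Real.exp (-(m * Real.log x - 2 * Real.sqrt (x * (t - x))
            - (m - 1/2) * Real.log (Real.sqrt (x * (t - x)))))
          ≤ C * Real.log x ^ (-ε₂) ∧
        Real.exp (m * Real.log x - 2 * Real.sqrt (x * (t - x))
            - (m - 1/2) * Real.log (Real.sqrt (x * (t - x))))
          ≤ C * Real.log x ^ (K - m + 1/2)) :=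
  exp_p2_two_sided_general m ε₂ K hm
end

section
/- Let n ≥ 1 be a natural number, k₀ ∈ ℂ, and let u, v : ℂ → ℂ² (i.e. functions into Fin 2 → ℂ) both be analytic at k₀ with u(k₀) ≠ 0. Suppose the analytic function f(k) = u₁(k)·v₂(k) − u₂(k)·v₁(k) vanishes at k₀ to order at least n, i.e. the p-th derivative f⁽ᵖ⁾(k₀) = 0 for every p with 0 ≤ p ≤ n−1. Then there exist complex constants μ₀, μ₁, …, μ_{n−1} such that for every p with 0 ≤ p ≤ n−1: v⁽ᵖ⁾(k₀) = Σ_{q=0}^{p} binomial(p,q)·μ_{p−q}·u⁽q⁾(k₀), where the derivatives of the vector-valued functions are taken componentwise. -/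
open Filter Topology Finset

private lemma analyticAt_deriv' {F : Type*} [NormedAddCommGroup F] [NormedSpace ℂ F]
    [CompleteSpace F] {f : ℂ → F} {x : ℂ} (hf : AnalyticAt ℂ f x) :
    AnalyticAt ℂ (deriv f) x := by
  obtain ⟨t, ht, hto, hxt⟩ := mem_nhds_iff.mp hf.eventually_analyticAt
  exact AnalyticOnNhd.deriv (fun y hy => ht hy) x hxt

private lemma itd_add' {F : Type*} [NormedAddCommGroup F] [NormedSpace ℂ F] [CompleteSpace F]
    (n : ℕ) : ∀ {f g : ℂ → F} {x : ℂ}, AnalyticAt ℂ f x → AnalyticAt ℂ g x →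
    iteratedDeriv n (fun k => f k + g k) x = iteratedDeriv n f x + iteratedDeriv n g x := by
  induction n with
  | zero => intro f g x hf hg; simp
  | succ n ih =>
    intro f g x hf hg
    have h1 : (deriv fun k => f k + g k) =ᶠ[𝓝 x] fun k => deriv f k + deriv g k := by
      filter_upwards [hf.eventually_analyticAt, hg.eventually_analyticAt] with y hfy hgy
      exact deriv_add hfy.differentiableAt hgy.differentiableAt
    rw [iteratedDeriv_succ', h1.iteratedDeriv_eq n,
      ih (analyticAt_deriv' hf) (analyticAt_deriv' hg),
      iteratedDeriv_succ', iteratedDeriv_succ']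

private lemma pascal_key (n : ℕ) (A B : ℕ → ℂ) :
    ∑ q ∈ Finset.range (n + 2), ((n+1).choose q : ℂ) * A q * B (n + 1 - q)
      = ∑ q ∈ Finset.range (n + 1), (n.choose q : ℂ) * A (q+1) * B (n - q)
        + ∑ q ∈ Finset.range (n + 1), (n.choose q : ℂ) * A q * B (n + 1 - q) := by
  rw [Finset.sum_range_succ' (fun q => (((n+1).choose q : ℂ)) * A q * B (n + 1 - q)) (n+1),
    Finset.sum_range_succ' (fun q => ((n.choose q : ℂ)) * A q * B (n + 1 - q)) n]
  simp only [Nat.choose_succ_succ, Nat.succ_sub_succ_eq_sub, Nat.cast_add,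
    Nat.choose_zero_right, Nat.cast_one, Nat.sub_zero, one_mul]
  rw [show (∑ i ∈ Finset.range (n+1),
        (((n.choose i : ℂ)) + ((n.choose (i+1) : ℂ))) * A (i+1) * B (n - i))
      = ∑ i ∈ Finset.range (n+1), (((n.choose i : ℂ)) * A (i+1) * B (n - i)
          + ((n.choose (i+1) : ℂ)) * A (i+1) * B (n - i)) from
    Finset.sum_congr rfl fun i _ => by ring]
  rw [Finset.sum_add_distrib,
    Finset.sum_range_succ (fun i => ((n.choose (i+1) : ℂ)) * A (i+1) * B (n - i)) n]
  simp [Nat.choose_succ_self]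
  ring

private lemma itd_mul (n : ℕ) : ∀ {f g : ℂ → ℂ} {x : ℂ}, AnalyticAt ℂ f x → AnalyticAt ℂ g x →
    iteratedDeriv n (fun k => f k * g k) x
      = ∑ q ∈ Finset.range (n + 1),
          (n.choose q : ℂ) * iteratedDeriv q f x * iteratedDeriv (n - q) g x := by
  induction n with
  | zero => intro f g x hf hg; simp
  | succ n ih =>
    intro f g x hf hg
    have h1 : (deriv fun k => f k * g k) =ᶠ[𝓝 x]
        fun k => deriv f k * g k + f k * deriv g k := by
      filter_upwards [hf.eventually_analyticAt, hg.eventually_analyticAt] with y hfy hgy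
      exact deriv_mul hfy.differentiableAt hgy.differentiableAt
    have e1 : iteratedDeriv n (fun k => deriv f k * g k + f k * deriv g k) x
        = iteratedDeriv n (fun k => deriv f k * g k) x
          + iteratedDeriv n (fun k => f k * deriv g k) x :=
      itd_add' n ((analyticAt_deriv' hf).mul hg) (hf.mul (analyticAt_deriv' hg))
    rw [iteratedDeriv_succ', h1.iteratedDeriv_eq n, e1,
      ih (analyticAt_deriv' hf) hg, ih hf (analyticAt_deriv' hg)]
    have e2 : ∀ q, iteratedDeriv q (deriv f) x = iteratedDeriv (q+1) f x :=
      fun q => congrFun (iteratedDeriv_succ' (n := q) (f := f)).symm x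
    have e3 : ∀ q, iteratedDeriv q (deriv g) x = iteratedDeriv (q+1) g x :=
      fun q => congrFun (iteratedDeriv_succ' (n := q) (f := g)).symm x
    simp only [e2]
    rw [pascal_key n (fun q => iteratedDeriv q f x) (fun q => iteratedDeriv q g x)]
    congr 1
    refine Finset.sum_congr rfl fun q hq => ?_
    rw [Finset.mem_range] at hq
    rw [e3]
    congr 2
    omega

private lemma itd_proj (p : ℕ) : ∀ {v : ℂ → Fin 2 → ℂ} {x : ℂ}, AnalyticAt ℂ v x →
    ∀ i : Fin 2, iteratedDeriv p (fun k => v k i) x = iteratedDeriv p v x i := by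
  induction p with
  | zero => intro v x hv i; simp
  | succ p ih =>
    intro v x hv i
    have h1 : (deriv fun k => v k i) =ᶠ[𝓝 x] fun y => deriv v y i := by
      filter_upwards [hv.eventually_analyticAt] with y hy
      have hd : HasDerivAt v (deriv v y) y := hy.differentiableAt.hasDerivAt
      exact (((ContinuousLinearMap.proj (R := ℂ) (φ := fun _ : Fin 2 => ℂ)
        i).hasFDerivAt).comp_hasDerivAt y hd).deriv
    rw [iteratedDeriv_succ', h1.iteratedDeriv_eq p, ih (analyticAt_deriv' hv) i,
      iteratedDeriv_succ']

private lemma core_lemma (n : ℕ) (k₀ : ℂ) (a b c d : ℂ → ℂ)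
    (ha : AnalyticAt ℂ a k₀) (hb : AnalyticAt ℂ b k₀) (hc : AnalyticAt ℂ c k₀)
    (hd : AnalyticAt ℂ d k₀) (ha0 : a k₀ ≠ 0)
    (hw : ∀ p < n, iteratedDeriv p (fun k => a k * d k - b k * c k) k₀ = 0) :
    ∃ μ : ℕ → ℂ, ∀ p < n,
      (iteratedDeriv p c k₀
        = ∑ q ∈ Finset.range (p+1), (p.choose q : ℂ) * μ (p - q) * iteratedDeriv q a k₀)
      ∧ (iteratedDeriv p d k₀
        = ∑ q ∈ Finset.range (p+1), (p.choose q : ℂ) * μ (p - q) * iteratedDeriv q b k₀) := by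
  set h : ℂ → ℂ := fun k => c k / a k with hdef
  have hh : AnalyticAt ℂ h k₀ := hc.div ha ha0
  refine ⟨fun q => iteratedDeriv q h k₀, fun p hp => ?_⟩
  have hane : ∀ᶠ y in 𝓝 k₀, a y ≠ 0 := ha.continuousAt.eventually_ne ha0
  have mulsum : ∀ (e : ℂ → ℂ), AnalyticAt ℂ e k₀ →
      iteratedDeriv p (fun k => h k * e k) k₀
        = ∑ q ∈ Finset.range (p+1),
            (p.choose q : ℂ) * iteratedDeriv (p - q) h k₀ * iteratedDeriv q e k₀ := by
    intro e he
    rw [itd_mul p hh he, ← Finset.sum_range_reflect]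
    refine Finset.sum_congr rfl fun q hq => ?_
    rw [Finset.mem_range] at hq
    have hqp : q ≤ p := Nat.lt_succ_iff.mp hq
    have h1 : p + 1 - 1 - q = p - q := by omega
    have h2 : p - (p - q) = q := by omega
    rw [h1, Nat.choose_symm hqp, h2]
  constructor
  · have hceq : c =ᶠ[𝓝 k₀] fun k => h k * a k := by
      filter_upwards [hane] with y hy
      simp only [hdef]
      field_simp
    rw [hceq.iteratedDeriv_eq p, mulsum a ha]
  · have hdeq : d =ᶠ[𝓝 k₀] fun k =>
        h k * b k + (a k * d k - b k * c k) * (a k)⁻¹ := by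
      filter_upwards [hane] with y hy
      simp only [hdef]
      field_simp
      ring
    have hF : AnalyticAt ℂ (fun k => a k * d k - b k * c k) k₀ := (ha.mul hd).sub (hb.mul hc)
    have hzero : iteratedDeriv p (fun k => (a k * d k - b k * c k) * (a k)⁻¹) k₀ = 0 := by
      rw [itd_mul p (g := fun k => (a k)⁻¹) hF (ha.inv ha0)]
      refine Finset.sum_eq_zero fun q hq => ?_
      rw [Finset.mem_range] at hq
      rw [hw q (lt_of_le_of_lt (Nat.lt_succ_iff.mp hq) hp)]
      ring
    rw [hdeq.iteratedDeriv_eq p,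
      itd_add' p (f := fun k => h k * b k) (g := fun k => (a k * d k - b k * c k) * (a k)⁻¹)
        (hh.mul hb) (hF.mul (ha.inv ha0)), hzero, add_zero, mulsum b hb]



/-- **Linear-dependence lemma at a zero of the Wronskian-type determinant.**
Let `n ≥ 1`, let `u, v : ℂ → ℂ²` be analytic at `k₀` with `u k₀ ≠ 0`, and suppose the
determinant `f(k) = u₁(k)·v₂(k) − u₂(k)·v₁(k)` vanishes at `k₀` to order at least `n`
(i.e. `f⁽ᵖ⁾(k₀) = 0` for `0 ≤ p ≤ n−1`).  Then there exist constants `μ₀, …, μ_{n−1} ∈ ℂ`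
such that for every `p` with `0 ≤ p ≤ n−1`,
`v⁽ᵖ⁾(k₀) = Σ_{q=0}^{p} binomial(p,q)·μ_{p−q}·u⁽q⁾(k₀)` (derivatives componentwise). -/
theorem linear_dependence_at_wronskian_zero
    (n : ℕ) (hn : 1 ≤ n) (k₀ : ℂ) (u v : ℂ → Fin 2 → ℂ)
    (hu : AnalyticAt ℂ u k₀) (hv : AnalyticAt ℂ v k₀) (hu0 : u k₀ ≠ 0)
    (hf : ∀ p < n,
      iteratedDeriv p (fun k => u k 0 * v k 1 - u k 1 * v k 0) k₀ = 0) :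
    ∃ μ : ℕ → ℂ, ∀ p < n,
      iteratedDeriv p v k₀
        = ∑ q ∈ Finset.range (p + 1),
            ((p.choose q : ℂ) * μ (p - q)) • iteratedDeriv q u k₀ := by
  obtain ⟨i, hi⟩ : ∃ i, u k₀ i ≠ 0 := by
    by_contra hcon
    push_neg at hcon
    exact hu0 (funext fun i => hcon i)
  have hui : ∀ j : Fin 2, AnalyticAt ℂ (fun k => u k j) k₀ :=
    fun j => ((ContinuousLinearMap.proj (R := ℂ) (φ := fun _ : Fin 2 => ℂ) j).analyticAt
      (u k₀)).comp hu
  have hvi : ∀ j : Fin 2, AnalyticAt ℂ (fun k => v k j) k₀ :=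
    fun j => ((ContinuousLinearMap.proj (R := ℂ) (φ := fun _ : Fin 2 => ℂ) j).analyticAt
      (v k₀)).comp hv
  have finish : ∀ (μ : ℕ → ℂ) (p : ℕ),
      (iteratedDeriv p (fun k => v k 0) k₀
        = ∑ q ∈ Finset.range (p+1),
            (p.choose q : ℂ) * μ (p - q) * iteratedDeriv q (fun k => u k 0) k₀) →
      (iteratedDeriv p (fun k => v k 1) k₀
        = ∑ q ∈ Finset.range (p+1),
            (p.choose q : ℂ) * μ (p - q) * iteratedDeriv q (fun k => u k 1) k₀) →
      iteratedDeriv p v k₀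
        = ∑ q ∈ Finset.range (p + 1),
            ((p.choose q : ℂ) * μ (p - q)) • iteratedDeriv q u k₀ := by
    intro μ p h0 h1
    funext l
    rw [Finset.sum_apply]
    have hterm : ∀ q, (((p.choose q : ℂ) * μ (p - q)) • iteratedDeriv q u k₀) l
        = (p.choose q : ℂ) * μ (p - q) * iteratedDeriv q (fun k => u k l) k₀ := by
      intro q
      rw [Pi.smul_apply, smul_eq_mul, itd_proj q hu l]
    fin_cases l
    · show iteratedDeriv p v k₀ 0 = ∑ q ∈ Finset.range (p+1),
        (((p.choose q : ℂ) * μ (p - q)) • iteratedDeriv q u k₀) 0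
      rw [← itd_proj p hv 0, h0]
      exact Finset.sum_congr rfl fun q _ => (hterm q).symm
    · show iteratedDeriv p v k₀ 1 = ∑ q ∈ Finset.range (p+1),
        (((p.choose q : ℂ) * μ (p - q)) • iteratedDeriv q u k₀) 1
      rw [← itd_proj p hv 1, h1]
      exact Finset.sum_congr rfl fun q _ => (hterm q).symm
  fin_cases i
  · obtain ⟨μ, hμ⟩ := core_lemma n k₀ (fun k => u k 0) (fun k => u k 1)
      (fun k => v k 0) (fun k => v k 1) (hui 0) (hui 1) (hvi 0) (hvi 1) hi hf
    exact ⟨μ, fun p hp => finish μ p (hμ p hp).1 (hμ p hp).2⟩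
  · have hf' : ∀ p < n,
        iteratedDeriv p (fun k => u k 1 * v k 0 - u k 0 * v k 1) k₀ = 0 := by
      intro p hp
      have heq : (fun k => u k 1 * v k 0 - u k 0 * v k 1)
          = fun k => -((fun k => u k 0 * v k 1 - u k 1 * v k 0) k) := by
        funext k; ring
      rw [heq, iteratedDeriv_fun_neg, hf p hp, neg_zero]
    obtain ⟨μ, hμ⟩ := core_lemma n k₀ (fun k => u k 1) (fun k => u k 0)
      (fun k => v k 1) (fun k => v k 0) (hui 1) (hui 0) (hvi 1) (hvi 0) hi hf'
    exact ⟨μ, fun p hp => finish μ p (hμ p hp).2 (hμ p hp).1⟩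
end

section
/- For every δ ∈ (0,1) there exists C > 0 such that for every ζ ∈ ℂ with ζ ≠ 0 and |Im ζ| ≥ δ·|ζ|, the Cauchy transform of the Gaussian satisfies | (1/(2πi))·∫_{−∞}^{∞} e^{−s²}/(s − ζ) ds − i/(2√π·ζ) | ≤ C/|ζ|³. -/
/-!
Expand the Cauchy kernel to second order at `s = 0`:
`1/(s - ζ) = -1/ζ - s/ζ² + s²/(ζ²(s - ζ))`. Against the Gaussian the first term gives `-√π/ζ`,
which after the prefactor `1/(2πi)` is the claimed leading term `i/(2√π ζ)`, and the second
vanishes because `s e^{-s²}` is odd. In the remainder `|s - ζ| ≥ |Im ζ| ≥ δ|ζ|`, so it is at most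
`∫ s² e^{-s²} ds / (δ|ζ|³)`.
-/

open MeasureTheory Complex Real

theorem integral_eq_zero_of_odd {G E : Type*} [MeasurableSpace G] [AddGroup G] [MeasurableNeg G]
    [NormedAddCommGroup E] [NormedSpace ℝ E] (μ : Measure G) [μ.IsNegInvariant] {f : G → E}
    (hf : f.Odd) : ∫ x, f x ∂μ = 0 := by
  have h : ∫ x, f x ∂μ = -∫ x, f x ∂μ := by
    rw [← integral_neg, ← integral_neg_eq_self f μ]
    simp only [hf.eq]
  have h2 : (2 : ℝ) • ∫ x, f x ∂μ = 0 := by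
    rw [two_smul]
    nth_rw 1 [h]
    exact neg_add_cancel _
  exact (smul_eq_zero.mp h2).resolve_left two_ne_zero

theorem integral_mul_cexp_neg_mul_sq_eq_zero (b : ℂ) :
    ∫ s : ℝ, (s : ℂ) * cexp (-b * (s : ℂ) ^ 2) = 0 :=
  integral_eq_zero_of_odd volume fun s => by push_cast; ring_nf

theorem integrable_sq_mul_cexp_neg_mul_sq {b : ℂ} (hb : 0 < b.re) :
    Integrable fun s : ℝ => (s : ℂ) ^ 2 * cexp (-b * (s : ℂ) ^ 2) := by
  refine (integrable_norm_iff (by fun_prop)).mp ?_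
  have hreal := integrable_rpow_mul_exp_neg_mul_sq hb (s := 2) (by norm_num)
  simp only [rpow_two] at hreal
  refine hreal.congr (Filter.Eventually.of_forall fun s => ?_)
  simp only [norm_mul, norm_pow, norm_real, norm_cexp_neg_mul_sq, Real.norm_eq_abs, sq_abs]

theorem integral_cexp_neg_sq : ∫ s : ℝ, cexp (-(s : ℂ) ^ 2) = √π := by
  have h := integral_gaussian 1
  simp only [neg_mul, one_mul, div_one] at h
  rw [← h, ← integral_complex_ofReal]
  simp

theorem inv_sub_eq_two_term_expansion {s ζ : ℂ} (hζ : ζ ≠ 0) (hs : s - ζ ≠ 0) :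
    (s - ζ)⁻¹ = -ζ⁻¹ - s * ζ⁻¹ ^ 2 + s ^ 2 * ζ⁻¹ ^ 2 * (s - ζ)⁻¹ := by
  field_simp
  ring

theorem abs_im_le_norm_ofReal_sub (s : ℝ) (ζ : ℂ) : |ζ.im| ≤ ‖(s : ℂ) - ζ‖ := by
  simpa using abs_im_le_norm ((s : ℂ) - ζ)

theorem norm_integral_div_ofReal_sub_add_inv_mul_integral_le {f : ℝ → ℂ} (hf : Integrable f)
    (hf1 : Integrable fun s : ℝ => (s : ℂ) * f s)
    (hf2 : Integrable fun s : ℝ => (s : ℂ) ^ 2 * f s)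
    (h_moment : ∫ s : ℝ, (s : ℂ) * f s = 0) {ζ : ℂ} (hζ : ζ.im ≠ 0) :
    ‖(∫ s : ℝ, f s / ((s : ℂ) - ζ)) + ζ⁻¹ * ∫ s : ℝ, f s‖
      ≤ (∫ s : ℝ, ‖(s : ℂ) ^ 2 * f s‖) / (‖ζ‖ ^ 2 * |ζ.im|) := by
  have him_pos : 0 < |ζ.im| := abs_pos.mpr hζ
  have hne : ∀ s : ℝ, (s : ℂ) - ζ ≠ 0 := fun s h => by
    simpa [h] using (abs_im_le_norm_ofReal_sub s ζ).trans_lt' him_pos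
  have hζ0 : ζ ≠ 0 := fun h => hζ (by simp [h])
  have hkernel : ∀ s : ℝ, ‖((s : ℂ) - ζ)⁻¹‖ ≤ |ζ.im|⁻¹ := fun s => by
    rw [norm_inv]
    exact inv_anti₀ him_pos (abs_im_le_norm_ofReal_sub s ζ)
  set R : ℝ → ℂ := fun s => ((s : ℂ) - ζ)⁻¹ * ((s : ℂ) ^ 2 * f s)
  have hR : Integrable R :=
    hf2.bdd_mul (by fun_prop (disch := exact hne _)) (Filter.Eventually.of_forall hkernel)
  have hR_bound : ‖∫ s, R s‖ ≤ (∫ s : ℝ, ‖(s : ℂ) ^ 2 * f s‖) / |ζ.im| := by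
    rw [← integral_div]
    refine norm_integral_le_of_norm_le (hf2.norm.div_const _)
      (Filter.Eventually.of_forall fun s => ?_)
    rw [norm_mul, div_eq_inv_mul]
    exact mul_le_mul_of_nonneg_right (hkernel s) (norm_nonneg _)
  have hsplit : ∀ s : ℝ, f s / ((s : ℂ) - ζ)
      = -ζ⁻¹ * f s - ζ⁻¹ ^ 2 * ((s : ℂ) * f s) + ζ⁻¹ ^ 2 * R s := fun s => by
    rw [div_eq_mul_inv, inv_sub_eq_two_term_expansion hζ0 (hne s)]
    ring
  have hintegral : (∫ s : ℝ, f s / ((s : ℂ) - ζ)) + ζ⁻¹ * ∫ s : ℝ, f s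
      = ζ⁻¹ ^ 2 * ∫ s, R s := by
    have h0 : Integrable fun s : ℝ => -ζ⁻¹ * f s := hf.const_mul _
    have h1 : Integrable fun s : ℝ => ζ⁻¹ ^ 2 * ((s : ℂ) * f s) := hf1.const_mul _
    have h01 : Integrable fun s : ℝ => -ζ⁻¹ * f s - ζ⁻¹ ^ 2 * ((s : ℂ) * f s) := h0.sub h1
    simp_rw [hsplit]
    rw [integral_add h01 (hR.const_mul _), integral_sub h0 h1, integral_const_mul,
      integral_const_mul, integral_const_mul, h_moment]
    ring
  rw [hintegral, norm_mul, norm_pow, norm_inv, mul_comm (‖ζ‖ ^ 2), ← div_div,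
    inv_pow, inv_mul_eq_div]
  gcongr

theorem cauchy_transform_gaussian_expansion_general (δ : ℝ) (hδ0 : 0 < δ) :
    ∃ C > 0, ∀ ζ : ℂ, ζ ≠ 0 → δ * ‖ζ‖ ≤ |ζ.im| →
      ‖((1 / (2 * (Real.pi : ℂ) * Complex.I))
              * (∫ s : ℝ, Complex.exp (-(s : ℂ) ^ 2) / ((s : ℂ) - ζ))
            - Complex.I / (2 * (Real.sqrt Real.pi : ℂ) * ζ))‖
        ≤ C / ‖ζ‖ ^ 3 := by
  have hb : 0 < (1 : ℂ).re := by simp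
  set K := ∫ s : ℝ, ‖(s : ℂ) ^ 2 * cexp (-(s : ℂ) ^ 2)‖
  have hK : 0 ≤ K := integral_nonneg fun _ => norm_nonneg _
  refine ⟨(K + 1) / (2 * π * δ), by positivity, fun ζ _ him => ?_⟩
  set F := ∫ s : ℝ, cexp (-(s : ℂ) ^ 2) / ((s : ℂ) - ζ)
  have him_pos : 0 < |ζ.im| := him.trans_lt' (by positivity)
  have hrem : ‖F + ζ⁻¹ * √π‖ ≤ K / (‖ζ‖ ^ 2 * |ζ.im|) := by
    rw [← integral_cexp_neg_sq]
    exact norm_integral_div_ofReal_sub_add_inv_mul_integral_le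
      (by simpa using integrable_cexp_neg_mul_sq hb)
      (by simpa using integrable_mul_cexp_neg_mul_sq hb)
      (by simpa using integrable_sq_mul_cexp_neg_mul_sq hb)
      (by simpa using integral_mul_cexp_neg_mul_sq_eq_zero 1) (abs_pos.mp him_pos)
  have hleading : 1 / (2 * (π : ℂ) * I) * (-ζ⁻¹ * √π) = I / (2 * (√π : ℂ) * ζ) := by
    have hsqrt : (√π : ℂ) ^ 2 = π := by exact_mod_cast sq_sqrt pi_pos.le
    have : (√π : ℂ) ≠ 0 := by exact_mod_cast (sqrt_pos.mpr pi_pos).ne'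
    field_simp
    linear_combination (-1 : ℂ) * hsqrt - π * I_sq
  calc _ = ‖1 / (2 * (π : ℂ) * I) * (F + ζ⁻¹ * √π)‖ := by
        rw [← hleading]
        ring_nf
    _ = (2 * π)⁻¹ * ‖F + ζ⁻¹ * √π‖ := by simp [abs_of_pos pi_pos]
    _ ≤ (2 * π)⁻¹ * (K / (‖ζ‖ ^ 2 * (δ * ‖ζ‖))) := by
        gcongr
        exact hrem.trans (by gcongr)
    _ = K / (2 * π * δ) / ‖ζ‖ ^ 3 := by field_simp
    _ ≤ (K + 1) / (2 * π * δ) / ‖ζ‖ ^ 3 := by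
        gcongr
        exact (lt_add_one K).le

/-- **Large-`ζ` expansion of the Cauchy transform of the Gaussian.**
For every `δ ∈ (0,1)` there is `C > 0` such that for every nonzero `ζ ∈ ℂ` with
`|Im ζ| ≥ δ·|ζ|`,
`| (1/(2πi))·∫_{ℝ} e^{−s²}/(s − ζ) ds − i/(2√π·ζ) | ≤ C/|ζ|³`. -/
theorem cauchy_transform_gaussian_expansion (δ : ℝ) (hδ0 : 0 < δ) (hδ1 : δ < 1) :
    ∃ C > 0, ∀ ζ : ℂ, ζ ≠ 0 → δ * ‖ζ‖ ≤ |ζ.im| →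
      ‖((1 / (2 * (Real.pi : ℂ) * Complex.I))
              * (∫ s : ℝ, Complex.exp (-(s : ℂ) ^ 2) / ((s : ℂ) - ζ))
            - Complex.I / (2 * (Real.sqrt Real.pi : ℂ) * ζ))‖
        ≤ C / ‖ζ‖ ^ 3 :=
  cauchy_transform_gaussian_expansion_general δ hδ0
end
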